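/- Under the hypotheses of the random uniform expansion theorem, suppose additionally there exist tempered random variables C(ω) > 0 and λ(ω) > 0 with ∫ log λ dP > 0 such that |D_x φ_ω^n(v)| ≥ C(ω) λ^{(n)}(ω) |v| for a.e. ω and all x, v, n, where λ^{(n)}(ω) = λ(ω)λ(θω)⋯λ(θ^{n-1}ω). Then F is random uniformly expanding with a constant expansion rate: there exist a constant λ₀ > 0 and a tempered random variable C'(ω) > 0 with |D_x φ_ω^{(n)}(v)| ≥ C'(ω) e^{λ₀ n}|v| for all x, v, n. -/

import Mathlib

/-!
Put `g = log λ - λ₀` with `λ₀ = ½ ∫ log λ dP`. Birkhoff's ergodic theorem gives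
`S_n g(ω) / n → λ₀ > 0`, so `D(ω) = inf_m S_m g(ω)` is finite and `C' = C · exp D` satisfies
`C'(ω) e^{λ₀ n} ≤ C(ω) exp (S_n log λ(ω)) = C(ω) λ^{(n)}(ω)`. Since
`D(θⁿω) = inf_m S_{n+m} g(ω) - S_n g(ω)` and `S_k g(ω)` grows like `λ₀ k`, `exp D` is tempered.
Birkhoff's theorem itself is derived from Garsia's maximal ergodic inequality.
-/

open MeasureTheory Filter Topology Manifold

noncomputable instance {E : Type*} [NormedAddCommGroup E] [NormedSpace ℝ E]
    {M : Type*} [TopologicalSpace M] [ChartedSpace E M] (x : M) :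
    NormedAddCommGroup (TangentSpace (𝓘(ℝ, E)) x) where
  toNorm := (inferInstance : Norm E)
  toAddCommGroup := inferInstance
  toMetricSpace := @MetricSpace.replaceTopology (TangentSpace (𝓘(ℝ, E)) x) _
    (inferInstance : MetricSpace E) rfl
  dist_eq := (inferInstance : NormedAddCommGroup E).dist_eq

noncomputable instance {E : Type*} [NormedAddCommGroup E] [NormedSpace ℝ E]
    {M : Type*} [TopologicalSpace M] [ChartedSpace E M] (x : M) :
    NormedSpace ℝ (TangentSpace (𝓘(ℝ, E)) x) :=
  inferInstanceAs (NormedSpace ℝ E)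

/-- The fibrewise compositions `φ_ω^{(n)} = φ_{θ^{n-1} ω} ∘ ⋯ ∘ φ_ω` of a random map. -/
def fibComp {Ω M : Type*} (θ : Ω → Ω) (φ : Ω → M → M) : ℕ → Ω → M → M
  | 0 => fun _ => id
  | n + 1 => fun ω => φ (θ^[n] ω) ∘ fibComp θ φ n ω

section Birkhoff

open Finset

variable {Ω : Type*} {T : Ω → Ω} {g : Ω → ℝ}

lemma birkhoffSum_const {M : Type*} [AddCommMonoid M] (T : Ω → Ω) (c : M) (n : ℕ) (ω : Ω) :
    birkhoffSum T (fun _ => c) n ω = n • c := by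
  simp [birkhoffSum]

lemma birkhoffSum_iterate {G : Type*} [AddCommGroup G] (T : Ω → Ω) (g : Ω → G) (n m : ℕ)
    (ω : Ω) :
    birkhoffSum T g m (T^[n] ω) = birkhoffSum T g (n + m) ω - birkhoffSum T g n ω :=
  eq_sub_of_add_eq' (birkhoffSum_add T g n m ω).symm

lemma prod_range_eq_exp_birkhoffSum_log {u : Ω → ℝ} {ω : Ω} (hu : ∀ i, 0 < u (T^[i] ω))
    (n : ℕ) :
    ∏ i ∈ range n, u (T^[i] ω) = Real.exp (birkhoffSum T (fun ω => Real.log (u ω)) n ω) := by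
  rw [birkhoffSum, Real.exp_sum]
  exact prod_congr rfl fun i _ => (Real.exp_log (hu i)).symm

noncomputable def birkhoffMax (T : Ω → Ω) (g : Ω → ℝ) (n : ℕ) : Ω → ℝ :=
  (range (n + 1)).sup' nonempty_range_add_one fun k => birkhoffSum T g k

lemma birkhoffMax_apply (n : ℕ) (ω : Ω) :
    birkhoffMax T g n ω =
      (range (n + 1)).sup' nonempty_range_add_one fun k => birkhoffSum T g k ω :=
  Finset.sup'_apply _ _ _

lemma birkhoffSum_le_birkhoffMax {k n : ℕ} (hkn : k ≤ n) (ω : Ω) :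
    birkhoffSum T g k ω ≤ birkhoffMax T g n ω := by
  rw [birkhoffMax_apply]
  exact le_sup' (fun k => birkhoffSum T g k ω) (mem_range_succ_iff.2 hkn)

lemma birkhoffMax_mono {m n : ℕ} (hmn : m ≤ n) (ω : Ω) :
    birkhoffMax T g m ω ≤ birkhoffMax T g n ω := by
  rw [birkhoffMax_apply]
  exact sup'_le _ _ fun k hk => birkhoffSum_le_birkhoffMax ((mem_range_succ_iff.1 hk).trans hmn) ω

lemma birkhoffMax_nonneg (n : ℕ) (ω : Ω) : 0 ≤ birkhoffMax T g n ω :=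
  birkhoffSum_zero T g ω ▸ birkhoffSum_le_birkhoffMax n.zero_le ω

lemma birkhoffMax_le_add_birkhoffMax_apply {n : ℕ} {ω : Ω} (h : 0 < birkhoffMax T g n ω) :
    birkhoffMax T g n ω ≤ g ω + birkhoffMax T g n (T ω) := by
  obtain ⟨k, hk, hmax⟩ := exists_mem_eq_sup' nonempty_range_add_one fun k => birkhoffSum T g k ω
  rw [birkhoffMax_apply, hmax] at h ⊢
  cases k with
  | zero => simp at h
  | succ j =>
    rw [birkhoffSum_succ']
    gcongr
    exact birkhoffSum_le_birkhoffMax (by simp at hk; omega) _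

variable [MeasurableSpace Ω] {μ : Measure Ω}

lemma measurable_birkhoffSum (hT : Measurable T) (hg : Measurable g) (n : ℕ) :
    Measurable (birkhoffSum T g n) :=
  measurable_sum _ fun i _ => hg.comp (hT.iterate i)

lemma measurableSet_not_bddAbove_range {f : ℕ → Ω → ℝ} (hf : ∀ n, Measurable (f n)) :
    MeasurableSet {ω | ¬BddAbove (Set.range fun n => f n ω)} := by
  have : {ω | ¬BddAbove (Set.range fun n => f n ω)} = ⋂ M : ℕ, ⋃ n, {ω | (M : ℝ) < f n ω} := by
    ext ω
    simp only [Set.mem_iInter, Set.mem_iUnion, Set.mem_ofPred_eq, not_bddAbove_iff,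
      Set.exists_range_iff]
    refine ⟨fun h M => h M, fun h x => ?_⟩
    obtain ⟨M, hM⟩ := exists_nat_gt x
    obtain ⟨n, hn⟩ := h M
    exact ⟨n, hM.trans hn⟩
  rw [this]
  exact .iInter fun M => .iUnion fun n => measurableSet_lt measurable_const (hf n)

lemma measurable_birkhoffMax (hT : Measurable T) (hg : Measurable g) (n : ℕ) :
    Measurable (birkhoffMax T g n) :=
  measurable_range_sup' fun k _ => measurable_birkhoffSum hT hg k

lemma MeasureTheory.Measure.QuasiMeasurePreserving.ae_forall_iterate {p : Ω → Prop}
    (hT : Measure.QuasiMeasurePreserving T μ μ) (hp : ∀ᵐ ω ∂μ, p ω) :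
    ∀ᵐ ω ∂μ, ∀ n, p (T^[n] ω) :=
  ae_all_iff.2 fun n => (hT.iterate n).ae hp

namespace MeasureTheory.MeasurePreserving

lemma integrable_birkhoffSum (hT : MeasurePreserving T μ μ) (hg : Integrable g μ) (n : ℕ) :
    Integrable (birkhoffSum T g n) μ :=
  integrable_finsetSum _ fun i _ => (hT.iterate i).integrable_comp_of_integrable hg

lemma integrable_birkhoffMax (hT : MeasurePreserving T μ μ) (hg : Integrable g μ) (n : ℕ) :
    Integrable (birkhoffMax T g n) μ :=
  sup'_induction (p := fun f => Integrable f μ) _ _ (fun _ h₁ _ h₂ => h₁.sup h₂)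
    fun k _ => hT.integrable_birkhoffSum hg k

/-- Garsia's maximal ergodic theorem. -/
theorem setIntegral_birkhoffMax_pos_nonneg (hT : MeasurePreserving T μ μ) (hgm : Measurable g)
    (hg : Integrable g μ) (n : ℕ) : 0 ≤ ∫ ω in {ω | 0 < birkhoffMax T g n ω}, g ω ∂μ := by
  set F := birkhoffMax T g n
  set A := {ω | 0 < F ω}
  have hA : MeasurableSet A :=
    measurableSet_lt measurable_const (measurable_birkhoffMax hT.measurable hgm n)
  have hF : Integrable F μ := hT.integrable_birkhoffMax hg n
  have hFT : Integrable (fun ω => F (T ω)) μ := hT.integrable_comp_of_integrable hF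
  have hFT_eq : ∫ ω, F (T ω) ∂μ = ∫ ω, F ω ∂μ := by
    rw [← integral_map hT.aemeasurable (by rw [hT.map_eq]; exact hF.aestronglyMeasurable),
      hT.map_eq]
  -- `F` vanishes off `A` while `F ∘ T ≥ 0`
  have hcompl : ∫ ω in Aᶜ, F ω - F (T ω) ∂μ ≤ 0 := by
    refine setIntegral_nonpos hA.compl fun ω hω => ?_
    have : F ω = 0 := le_antisymm (not_lt.1 hω) (birkhoffMax_nonneg n ω)
    linarith [birkhoffMax_nonneg (T := T) (g := g) n (T ω)]
  have hsplit := integral_add_compl hA (hF.sub hFT)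
  simp only [Pi.sub_apply] at hsplit
  calc 0 = ∫ ω, F ω - F (T ω) ∂μ := by rw [integral_sub hF hFT, hFT_eq, sub_self]
  _ ≤ ∫ ω in A, F ω - F (T ω) ∂μ := by linarith
  _ ≤ ∫ ω in A, g ω ∂μ :=
    setIntegral_mono_on (hF.sub hFT).integrableOn hg.integrableOn hA
      fun ω hω => by linarith [birkhoffMax_le_add_birkhoffMax_apply (T := T) hω]

theorem setIntegral_iUnion_birkhoffMax_pos_nonneg (hT : MeasurePreserving T μ μ)
    (hgm : Measurable g) (hg : Integrable g μ) :
    0 ≤ ∫ ω in ⋃ n, {ω | 0 < birkhoffMax T g n ω}, g ω ∂μ :=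
  ge_of_tendsto' (tendsto_setIntegral_of_monotone
    (fun n => measurableSet_lt measurable_const (measurable_birkhoffMax hT.measurable hgm n))
    (fun _ _ hmn ω hω => hω.trans_le (birkhoffMax_mono hmn ω)) hg.integrableOn)
    fun n => hT.setIntegral_birkhoffMax_pos_nonneg hgm hg n

end MeasureTheory.MeasurePreserving

namespace Ergodic

theorem ae_bddAbove_birkhoffSum [IsFiniteMeasure μ] (hT : Ergodic T μ) (hgm : Measurable g)
    (hg : Integrable g μ) (hneg : ∫ ω, g ω ∂μ < 0) :
    ∀ᵐ ω ∂μ, BddAbove (Set.range fun n => birkhoffSum T g n ω) := by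
  set E := {ω | ¬BddAbove (Set.range fun n => birkhoffSum T g n ω)}
  have hEinv : T ⁻¹' E ⊆ E := by
    rintro ω hω ⟨M, hM⟩
    refine hω ⟨M - g ω, ?_⟩
    rintro _ ⟨n, rfl⟩
    have : birkhoffSum T g (n + 1) ω ≤ M := hM ⟨n + 1, rfl⟩
    rw [birkhoffSum_succ'] at this
    linarith
  rcases hT.ae_empty_or_univ_of_preimage_ae_le
    (measurableSet_not_bddAbove_range (measurable_birkhoffSum hT.measurable hgm)).nullMeasurableSet
    hEinv.eventuallyLE with hE | hE
  · filter_upwards [measure_eq_zero_iff_ae_notMem.1 (ae_eq_empty.1 hE)] with ω hω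
    exact not_not.1 hω
  -- if almost every orbit has unbounded Birkhoff sums, the maximal inequality forces `∫ g ≥ 0`
  have hEA : E ⊆ ⋃ n, {ω | 0 < birkhoffMax T g n ω} := fun ω hω => by
    obtain ⟨_, ⟨n, rfl⟩, hn⟩ := not_bddAbove_iff.1 hω 0
    exact Set.mem_iUnion.2 ⟨n, hn.trans_le (birkhoffSum_le_birkhoffMax le_rfl ω)⟩
  have hnonneg := hT.toMeasurePreserving.setIntegral_iUnion_birkhoffMax_pos_nonneg hgm hg
  rw [Measure.restrict_congr_set (ae_eq_univ.2 (measure_mono_null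
    (Set.compl_subset_compl.2 hEA) (ae_eq_univ.1 hE))), Measure.restrict_univ] at hnonneg
  linarith

theorem ae_eventually_birkhoffSum_div_lt [IsProbabilityMeasure μ] (hT : Ergodic T μ)
    (hgm : Measurable g) (hg : Integrable g μ) {ε : ℝ} (hε : 0 < ε) :
    ∀ᵐ ω ∂μ, ∀ᶠ n : ℕ in atTop, birkhoffSum T g n ω / n < ∫ ω, g ω ∂μ + ε := by
  set c := ∫ ω, g ω ∂μ + ε / 2
  have hneg : ∫ ω, (g - fun _ => c : Ω → ℝ) ω ∂μ < 0 := by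
    simp only [Pi.sub_apply, integral_sub hg (integrable_const c), integral_const, probReal_univ,
      one_smul, c]
    linarith
  filter_upwards [hT.ae_bddAbove_birkhoffSum (hgm.sub measurable_const)
    (hg.sub (integrable_const c)) hneg] with ω ⟨M, hM⟩
  filter_upwards [tendsto_natCast_atTop_atTop.eventually_gt_atTop (2 * M / ε),
    eventually_gt_atTop 0] with n hnM hn
  have hsum := hM ⟨n, rfl⟩
  simp only [birkhoffSum_sub, birkhoffSum_const, nsmul_eq_mul, c] at hsum
  rw [div_lt_iff₀ hε] at hnM
  rw [div_lt_iff₀ (by positivity)]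
  linarith

theorem ae_tendsto_birkhoffSum_div [IsProbabilityMeasure μ] (hT : Ergodic T μ)
    (hgm : Measurable g) (hg : Integrable g μ) :
    ∀ᵐ ω ∂μ, Tendsto (fun n : ℕ => birkhoffSum T g n ω / n) atTop (𝓝 (∫ ω, g ω ∂μ)) := by
  have hup := ae_all_iff.2 fun k : ℕ =>
    hT.ae_eventually_birkhoffSum_div_lt hgm hg (Nat.one_div_pos_of_nat (n := k))
  have hlo := ae_all_iff.2 fun k : ℕ =>
    hT.ae_eventually_birkhoffSum_div_lt hgm.neg hg.neg (Nat.one_div_pos_of_nat (n := k))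
  filter_upwards [hup, hlo] with ω hup hlo
  refine tendsto_order.2 ⟨fun l hl => ?_, fun u hu => ?_⟩
  · obtain ⟨k, hk⟩ := exists_nat_one_div_lt (sub_pos.2 hl)
    filter_upwards [hlo k] with n hn
    simp only [birkhoffSum_neg, Pi.neg_apply, integral_neg, neg_div] at hn
    linarith
  · obtain ⟨k, hk⟩ := exists_nat_one_div_lt (sub_pos.2 hu)
    filter_upwards [hup k] with n hn
    linarith

end Ergodic

end Birkhoff

section TailInfimum

variable {s : ℕ → ℝ} {c : ℝ}

lemma tendsto_atTop_of_tendsto_div (hc : 0 < c)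
    (hs : Tendsto (fun n : ℕ => s n / n) atTop (𝓝 c)) : Tendsto s atTop atTop :=
  (hs.pos_mul_atTop hc tendsto_natCast_atTop_atTop).congr' <|
    (eventually_ne_atTop 0).mono fun _ hn => div_mul_cancel₀ _ (Nat.cast_ne_zero.2 hn)

lemma tendsto_iInf_add_sub_div (hc : 0 < c) (hs : Tendsto (fun n : ℕ => s n / n) atTop (𝓝 c)) :
    Tendsto (fun n : ℕ => (⨅ m, s (n + m) - s n) / n) atTop (𝓝 0) := by
  obtain ⟨b, hb⟩ := bddBelow_range_of_tendsto_atTop_atTop (tendsto_atTop_of_tendsto_div hc hs)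
  have hbdd : ∀ n, BddBelow (Set.range fun m => s (n + m) - s n) := fun n =>
    ⟨b - s n, by rintro _ ⟨m, rfl⟩; linarith [hb ⟨n + m, rfl⟩]⟩
  refine tendsto_order.2 ⟨fun l hl => ?_, fun u hu => ?_⟩
  · -- once `(c - δ) k ≤ s k ≤ (c + δ) k` for all `k ≥ n`, the tail infimum is at least `-2δn`
    set δ := min (-l / 4) c
    have hδ : 0 < δ := lt_min (by linarith) hc
    have hδl : l < -(2 * δ) := by linarith [min_le_left (-l / 4) c]
    have hδc : 0 ≤ c - δ := sub_nonneg.2 (min_le_right _ _)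
    have hrate : ∀ᶠ k : ℕ in atTop, (c - δ) * k ≤ s k ∧ s k ≤ (c + δ) * k := by
      filter_upwards [hs.eventually (Ioo_mem_nhds (sub_lt_self c hδ) (lt_add_of_pos_right c hδ)),
        eventually_gt_atTop 0] with k hk hk0
      have hk0' : (0 : ℝ) < k := Nat.cast_pos.2 hk0
      exact ⟨((lt_div_iff₀ hk0').1 hk.1).le, ((div_lt_iff₀ hk0').1 hk.2).le⟩
    filter_upwards [eventually_forall_ge_atTop.2 hrate, eventually_gt_atTop 0] with n hn hn0
    have hn0' : (0 : ℝ) < n := Nat.cast_pos.2 hn0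
    rw [lt_div_iff₀ hn0']
    calc l * n < -(2 * δ) * n := mul_lt_mul_of_pos_right hδl hn0'
    _ ≤ ⨅ m, s (n + m) - s n := le_ciInf fun m => by
      have h₁ := (hn (n + m) (Nat.le_add_right n m)).1
      have h₂ := (hn n le_rfl).2
      push_cast at h₁
      nlinarith [mul_nonneg hδc m.cast_nonneg]
  · exact .of_forall fun n => (div_nonpos_of_nonpos_of_nonneg
      (by simpa using ciInf_le (hbdd n) 0) n.cast_nonneg).trans_lt hu

end TailInfimum

theorem random_uniformly_expanding_of_tempered_rates_general
    {E : Type*} [NormedAddCommGroup E] [NormedSpace ℝ E]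
    {M : Type*} [TopologicalSpace M] [ChartedSpace E M]
    {Ω : Type*} [MeasurableSpace Ω] (P : Measure Ω) [IsProbabilityMeasure P]
    (θ : Ω → Ω) (hθerg : Ergodic θ P)
    (φ : Ω → M → M)
    (C lamf : Ω → ℝ) (hCmeas : Measurable C) (hlamfmeas : Measurable lamf)
    (hCpos : ∀ᵐ ω ∂P, 0 < C ω) (hlamfpos : ∀ᵐ ω ∂P, 0 < lamf ω)
    (hCtemp : ∀ᵐ ω ∂P, Tendsto (fun n : ℕ => Real.log (C (θ^[n] ω)) / n) atTop (𝓝 0))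
    (hintlog : Integrable (fun ω => Real.log (lamf ω)) P)
    (hlogpos : 0 < ∫ ω, Real.log (lamf ω) ∂P)
    (hexp : ∀ᵐ ω ∂P, ∀ (x : M) (v : TangentSpace (𝓘(ℝ, E)) x), ∀ n : ℕ, 1 ≤ n →
      C ω * (∏ i ∈ Finset.range n, lamf (θ^[i] ω)) * ‖v‖ ≤
        ‖mfderiv (𝓘(ℝ, E)) (𝓘(ℝ, E)) (fibComp θ φ n ω) x v‖) :
    ∃ lam0 > 0, ∃ C' : Ω → ℝ, Measurable C' ∧ (∀ᵐ ω ∂P, 0 < C' ω) ∧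
      (∀ᵐ ω ∂P, Tendsto (fun n : ℕ => Real.log (C' (θ^[n] ω)) / n) atTop (𝓝 0)) ∧
      (∀ᵐ ω ∂P, ∀ (x : M) (v : TangentSpace (𝓘(ℝ, E)) x), ∀ n : ℕ, 1 ≤ n →
        C' ω * Real.exp (lam0 * n) * ‖v‖ ≤
          ‖mfderiv (𝓘(ℝ, E)) (𝓘(ℝ, E)) (fibComp θ φ n ω) x v‖) := by
  set lam0 := (∫ ω, Real.log (lamf ω) ∂P) / 2
  set g : Ω → ℝ := (fun ω => Real.log (lamf ω)) - fun _ => lam0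
  have hgm : Measurable g := hlamfmeas.log.sub measurable_const
  have hgi : Integrable g P := hintlog.sub (integrable_const lam0)
  have hgpos : 0 < ∫ ω, g ω ∂P := by
    simp only [g, Pi.sub_apply, integral_sub hintlog (integrable_const lam0), integral_const,
      probReal_univ, one_smul, lam0]
    linarith
  have hbirk := hθerg.ae_tendsto_birkhoffSum_div hgm hgi
  refine ⟨lam0, half_pos hlogpos, fun ω => C ω * Real.exp (⨅ m, birkhoffSum θ g m ω),
    hCmeas.mul (Measurable.iInf fun m => measurable_birkhoffSum hθerg.measurable hgm m).exp,
    ?_, ?_, ?_⟩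
  · filter_upwards [hCpos] with ω hω using mul_pos hω (Real.exp_pos _)
  · filter_upwards [hθerg.quasiMeasurePreserving.ae_forall_iterate hCpos, hCtemp, hbirk]
      with ω hC hCtemp hbirk
    simpa [Real.log_mul, (hC _).ne', add_div, birkhoffSum_iterate] using
      hCtemp.add (tendsto_iInf_add_sub_div hgpos hbirk)
  · filter_upwards [hexp, hCpos, hθerg.quasiMeasurePreserving.ae_forall_iterate hlamfpos, hbirk]
      with ω hexp hC hlam hbirk x v n hn
    refine le_trans ?_ (hexp x v n hn)
    have hinf : ⨅ m, birkhoffSum θ g m ω ≤ birkhoffSum θ g n ω := ciInf_le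
      (bddBelow_range_of_tendsto_atTop_atTop (tendsto_atTop_of_tendsto_div hgpos hbirk)) n
    have hsum : birkhoffSum θ (fun ω => Real.log (lamf ω)) n ω =
        birkhoffSum θ g n ω + lam0 * n := by
      simp [g, birkhoffSum_sub, birkhoffSum_const, mul_comm]
    rw [prod_range_eq_exp_birkhoffSum_log hlam, hsum, Real.exp_add, ← mul_assoc]
    gcongr

/-- Corollary to Theorem 1: if `|D_x φ_ω^{(n)}(v)| ≥ C(ω) λ(ω)⋯λ(θ^{n-1}ω) |v|` for tempered
random variables `C(ω) > 0`, `λ(ω) > 0` with `∫ log λ dP > 0`, then the random map is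
random uniformly expanding with a constant expansion rate. -/
theorem random_uniformly_expanding_of_tempered_rates
    {E : Type*} [NormedAddCommGroup E] [NormedSpace ℝ E] [FiniteDimensional ℝ E]
    {M : Type*} [TopologicalSpace M] [ChartedSpace E M]
    [IsManifold (𝓘(ℝ, E)) (⊤ : ℕ∞) M] [CompactSpace M]
    [MeasurableSpace M] [BorelSpace M]
    {Ω : Type*} [MeasurableSpace Ω] (P : Measure Ω) [IsProbabilityMeasure P]
    (θ : Ω → Ω) (hθ : MeasurePreserving θ P P) (hθerg : Ergodic θ P)
    (hθinv : Function.Bijective θ)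
    (φ : Ω → M → M) (hφmeas : Measurable fun p : Ω × M => φ p.1 p.2)
    (hφ : ∀ᵐ ω ∂P, IsLocalDiffeomorph (𝓘(ℝ, E)) (𝓘(ℝ, E)) 1 (φ ω))
    (hintD : Integrable (fun ω => ⨆ x : M, ‖mfderiv (𝓘(ℝ, E)) (𝓘(ℝ, E)) (φ ω) x‖) P)
    (hintDinv : Integrable
      (fun ω => ⨆ x : M, ‖(mfderiv (𝓘(ℝ, E)) (𝓘(ℝ, E)) (φ ω) x).inverse‖) P)
    (C lamf : Ω → ℝ) (hCmeas : Measurable C) (hlamfmeas : Measurable lamf)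
    (hCpos : ∀ᵐ ω ∂P, 0 < C ω) (hlamfpos : ∀ᵐ ω ∂P, 0 < lamf ω)
    (hCtemp : ∀ᵐ ω ∂P, Tendsto (fun n : ℕ => Real.log (C (θ^[n] ω)) / n) atTop (𝓝 0))
    (hlamftemp : ∀ᵐ ω ∂P,
      Tendsto (fun n : ℕ => Real.log (lamf (θ^[n] ω)) / n) atTop (𝓝 0))
    (hintlog : Integrable (fun ω => Real.log (lamf ω)) P)
    (hlogpos : 0 < ∫ ω, Real.log (lamf ω) ∂P)
    (hexp : ∀ᵐ ω ∂P, ∀ (x : M) (v : TangentSpace (𝓘(ℝ, E)) x), ∀ n : ℕ, 1 ≤ n →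
      C ω * (∏ i ∈ Finset.range n, lamf (θ^[i] ω)) * ‖v‖ ≤
        ‖mfderiv (𝓘(ℝ, E)) (𝓘(ℝ, E)) (fibComp θ φ n ω) x v‖) :
    ∃ lam0 > 0, ∃ C' : Ω → ℝ, Measurable C' ∧ (∀ᵐ ω ∂P, 0 < C' ω) ∧
      (∀ᵐ ω ∂P, Tendsto (fun n : ℕ => Real.log (C' (θ^[n] ω)) / n) atTop (𝓝 0)) ∧
      (∀ᵐ ω ∂P, ∀ (x : M) (v : TangentSpace (𝓘(ℝ, E)) x), ∀ n : ℕ, 1 ≤ n →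
        C' ω * Real.exp (lam0 * n) * ‖v‖ ≤
          ‖mfderiv (𝓘(ℝ, E)) (𝓘(ℝ, E)) (fibComp θ φ n ω) x v‖) :=
  random_uniformly_expanding_of_tempered_rates_general P θ hθerg φ C lamf hCmeas hlamfmeas hCpos
    hlamfpos hCtemp hintlog hlogpos hexp
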